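/- arXiv:2402.07298 — 2 statements merged into one kernel-verified Lean document; each statement's English description precedes it below -/
import Mathlib

section
/- Let H be an M×N matrix with nonnegative entries and y ∈ {0,1}^M. If any solution to T(Hz) = y with z ∈ {0,1}^N exists, then x_max = ¬T(Hᵀ(¬y)) is the unique solution of maximal squared Euclidean norm: for every solution z, ‖z‖₂² ≤ ‖x_max‖₂², with equality only if z = x_max. -/
open Finset

/-- Positivity thresholding operator. -/
noncomputable def T {K : ℕ} (v : Fin K → ℝ) : Fin K → ℝ := fun k => if 0 < v k then 1 else 0

/-- Entrywise Boolean negation (swaps 0 and 1 on binary vectors). -/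
def bneg {K : ℕ} (v : Fin K → ℝ) : Fin K → ℝ := fun k => 1 - v k

/-- Matrix-vector product. -/
def mulv {M N : ℕ} (H : Fin M → Fin N → ℝ) (x : Fin N → ℝ) : Fin M → ℝ :=
  fun m => ∑ n, H m n * x n

/-- Transpose. -/
def tr {M N : ℕ} (H : Fin M → Fin N → ℝ) : Fin N → Fin M → ℝ := fun n m => H m n

/-- Silhouette operator. -/
noncomputable def S {M N : ℕ} (H : Fin M → Fin N → ℝ) (x : Fin N → ℝ) : Fin M → ℝ := T (mulv H x)

/-- Maximal solution candidate. -/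
noncomputable def xmax {M N : ℕ} (H : Fin M → Fin N → ℝ) (y : Fin M → ℝ) : Fin N → ℝ :=
  bneg (T (mulv (tr H) (bneg y)))

/-- A vector is binary if each entry is 0 or 1. -/
def IsBin {K : ℕ} (v : Fin K → ℝ) : Prop := ∀ k, v k = 0 ∨ v k = 1

/-! A coordinate `n` with `z n > 0` can only feed rows `m` that light up, i.e. rows with
`y m = 1`. Hence `Hᵀ(¬y)` vanishes at `n`, and `xmax` has a `1` there: every solution lies
below `xmax` coordinatewise, which gives both the norm bound and its equality case. -/

lemma IsBin.nonneg {K : ℕ} {v : Fin K → ℝ} (hv : IsBin v) : 0 ≤ v := fun k => by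
  rcases hv k with h | h <;> simp [h]

lemma IsBin.le_one {K : ℕ} {v : Fin K → ℝ} (hv : IsBin v) : v ≤ 1 := fun k => by
  rcases hv k with h | h <;> simp [h]

lemma T_eq_one_of_ne_zero {K : ℕ} {v : Fin K → ℝ} {k : Fin K} (h : T v k ≠ 0) : T v k = 1 := by
  unfold T at *
  split_ifs at * <;> simp_all

lemma mulv_nonneg {M N : ℕ} {H : Fin M → Fin N → ℝ} (hH : ∀ m n, 0 ≤ H m n)
    {x : Fin N → ℝ} (hx : 0 ≤ x) (m : Fin M) : 0 ≤ mulv H x m :=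
  sum_nonneg fun n _ => mul_nonneg (hH m n) (hx n)

lemma mulv_tr_bneg_S_eq_zero {M N : ℕ} {H : Fin M → Fin N → ℝ} (hH : ∀ m n, 0 ≤ H m n)
    {z : Fin N → ℝ} (hz : 0 ≤ z) {n : Fin N} (hn : z n ≠ 0) :
    mulv (tr H) (bneg (S H z)) n = 0 := by
  refine sum_eq_zero fun m _ => ?_
  by_cases hpos : 0 < mulv H z m
  · simp [tr, bneg, S, T, hpos]
  · have hrow : mulv H z m = 0 := le_antisymm (not_lt.mp hpos) (mulv_nonneg hH hz m)
    have hterm : H m n * z n = 0 :=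
      (sum_eq_zero_iff_of_nonneg fun k _ => mul_nonneg (hH m k) (hz k)).mp hrow n (mem_univ n)
    simp [tr, (mul_eq_zero.mp hterm).resolve_right hn]

lemma le_xmax_S {M N : ℕ} {H : Fin M → Fin N → ℝ} (hH : ∀ m n, 0 ≤ H m n)
    {z : Fin N → ℝ} (hz₀ : 0 ≤ z) (hz₁ : z ≤ 1) : z ≤ xmax H (S H z) := fun n => by
  by_cases hn : z n = 0
  · rw [hn]
    by_cases ht : T (mulv (tr H) (bneg (S H z))) n = 0
    · simp [xmax, bneg, ht]
    · simp [xmax, bneg, T_eq_one_of_ne_zero ht]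
  · simpa [xmax, bneg, T, mulv_tr_bneg_S_eq_zero hH hz₀ hn] using hz₁ n

lemma sum_sq_le_sum_sq_of_le {K : ℕ} {z x : Fin K → ℝ} (hz : 0 ≤ z) (hzx : z ≤ x) :
    ∑ k, z k ^ 2 ≤ ∑ k, x k ^ 2 :=
  sum_le_sum fun k _ => pow_le_pow_left₀ (hz k) (hzx k) 2

lemma eq_of_le_of_sum_sq_eq {K : ℕ} {z x : Fin K → ℝ} (hz : 0 ≤ z) (hzx : z ≤ x)
    (h : ∑ k, z k ^ 2 = ∑ k, x k ^ 2) : z = x := by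
  have hsq := (sum_eq_sum_iff_of_le fun k _ => pow_le_pow_left₀ (hz k) (hzx k) 2).mp h
  funext k
  exact (pow_left_inj₀ (hz k) ((hz k).trans (hzx k)) two_ne_zero).mp (hsq k (mem_univ k))

theorem stmt_6_general {M N : ℕ} (H : Fin M → Fin N → ℝ) (hH : ∀ m n, 0 ≤ H m n)
    (y : Fin M → ℝ) :
    ∀ z : Fin N → ℝ, IsBin z → S H z = y →
      (∑ n, (z n) ^ 2 ≤ ∑ n, (xmax H y n) ^ 2) ∧
      ((∑ n, (z n) ^ 2 = ∑ n, (xmax H y n) ^ 2) → z = xmax H y) := by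
  rintro z hz rfl
  have hle : z ≤ xmax H (S H z) := le_xmax_S hH hz.nonneg hz.le_one
  exact ⟨sum_sq_le_sum_sq_of_le hz.nonneg hle, eq_of_le_of_sum_sq_eq hz.nonneg hle⟩

theorem stmt_6 {M N : ℕ} (H : Fin M → Fin N → ℝ) (hH : ∀ m n, 0 ≤ H m n)
    (y : Fin M → ℝ) (hy : IsBin y)
    (hex : ∃ z : Fin N → ℝ, IsBin z ∧ S H z = y) :
    ∀ z : Fin N → ℝ, IsBin z → S H z = y →
      (∑ n, (z n) ^ 2 ≤ ∑ n, (xmax H y n) ^ 2) ∧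
      ((∑ n, (z n) ^ 2 = ∑ n, (xmax H y n) ^ 2) → z = xmax H y) :=
  stmt_6_general H hH y
end

section
/- Let H have nonnegative entries. The operator x ↦ x_max(S(x)) is idempotent on binary vectors: x_max(S(x_max(S(x)))) = x_max(S(x)) for all binary x, where S(x) = T(Hx) and x_max(y) = ¬T(Hᵀ(¬y)). -/
open Finset

lemma T_binary {K : ℕ} (v : Fin K → ℝ) : IsBin (T v) := by
  intro k; unfold T; split <;> simp

lemma xmax_binary {M N : ℕ} (H : Fin M → Fin N → ℝ) (y : Fin M → ℝ) :
    IsBin (xmax H y) := by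
  intro n
  show 1 - T (mulv (tr H) (bneg y)) n = 0 ∨ 1 - T (mulv (tr H) (bneg y)) n = 1
  rcases T_binary (mulv (tr H) (bneg y)) n with h | h <;> rw [h] <;> norm_num

lemma bin_nonneg {K : ℕ} {v : Fin K → ℝ} (hv : IsBin v) (k : Fin K) : 0 ≤ v k := by
  rcases hv k with h | h <;> rw [h] <;> norm_num

lemma S_fix {M N : ℕ} (H : Fin M → Fin N → ℝ) (hH : ∀ m n, 0 ≤ H m n)
    (x : Fin N → ℝ) (hx : IsBin x) : S H (xmax H (S H x)) = S H x := by
  have hy : IsBin (S H x) := T_binary _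
  have hxs : IsBin (xmax H (S H x)) := xmax_binary _ _
  funext m
  show (if 0 < mulv H (xmax H (S H x)) m then (1:ℝ) else 0) = if 0 < mulv H x m then 1 else 0
  have hiff : (0 < mulv H (xmax H (S H x)) m) ↔ (0 < mulv H x m) := by
    constructor
    · intro h
      obtain ⟨n, hn⟩ : ∃ n, 0 < H m n * xmax H (S H x) n := by
        by_contra hc
        push_neg at hc
        have : mulv H (xmax H (S H x)) m ≤ 0 := Finset.sum_nonpos (fun n _ => hc n)
        linarith
      have hHmn : 0 < H m n := by
        rcases hxs n with h0 | h1
        · rw [h0] at hn; simp at hn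
        · rw [h1] at hn; simpa using hn
      have hxn : xmax H (S H x) n = 1 := by
        rcases hxs n with h0 | h1
        · rw [h0] at hn; simp at hn
        · exact h1
      have hT : ¬ (0 < mulv (tr H) (bneg (S H x)) n) := by
        intro hpos
        have h0 : xmax H (S H x) n = 0 := by simp [xmax, bneg, T, hpos]
        rw [hxn] at h0; norm_num at h0
      have hterm : ∀ m', 0 ≤ tr H n m' * bneg (S H x) m' := by
        intro m'
        apply mul_nonneg (hH m' n)
        rcases hy m' with h | h <;> simp [bneg, h]
      have hsum0 : mulv (tr H) (bneg (S H x)) n = 0 := by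
        have h1 : mulv (tr H) (bneg (S H x)) n ≤ 0 := le_of_not_gt hT
        have h2 : 0 ≤ mulv (tr H) (bneg (S H x)) n :=
          Finset.sum_nonneg (fun m' _ => hterm m')
        linarith
      have hall := (Finset.sum_eq_zero_iff_of_nonneg
        (fun m' (_ : m' ∈ Finset.univ) => hterm m')).mp hsum0
      have hm0 : tr H n m * bneg (S H x) m = 0 := hall m (Finset.mem_univ m)
      have hSm : S H x m = 1 := by
        simp only [tr, bneg] at hm0
        rcases mul_eq_zero.mp hm0 with h | h
        · exact absurd h (ne_of_gt hHmn)
        · linarith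
      by_contra hc
      have : S H x m = 0 := by simp [S, T, hc]
      rw [hSm] at this; norm_num at this
    · intro h
      obtain ⟨n, hn⟩ : ∃ n, 0 < H m n * x n := by
        by_contra hc
        push_neg at hc
        have : mulv H x m ≤ 0 := Finset.sum_nonpos (fun n _ => hc n)
        linarith
      have hHmn : 0 < H m n := by
        rcases hx n with h0 | h1
        · rw [h0] at hn; simp at hn
        · rw [h1] at hn; simpa using hn
      have hxn : x n = 1 := by
        rcases hx n with h0 | h1
        · rw [h0] at hn; simp at hn
        · exact h1
      have hxs1 : xmax H (S H x) n = 1 := by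
        have hall : ∀ m' ∈ Finset.univ, tr H n m' * bneg (S H x) m' = 0 := by
          intro m' _
          rcases eq_or_lt_of_le (hH m' n) with he | hp
          · simp [tr, ← he]
          · have hpos : 0 < mulv H x m' := by
              have h1 : (0:ℝ) < H m' n * x n := by rw [hxn]; simpa using hp
              have h2 : H m' n * x n ≤ ∑ k, H m' k * x k :=
                Finset.single_le_sum (f := fun k => H m' k * x k)
                  (fun k _ => mul_nonneg (hH m' k) (bin_nonneg hx k)) (Finset.mem_univ n)
              calc (0:ℝ) < H m' n * x n := h1
                _ ≤ ∑ k, H m' k * x k := h2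
            have hS : S H x m' = 1 := by simp [S, T, hpos]
            simp [bneg, hS]
        have hsum : mulv (tr H) (bneg (S H x)) n = 0 := Finset.sum_eq_zero hall
        simp [xmax, bneg, T, hsum]
      unfold mulv
      apply Finset.sum_pos' (fun k _ => mul_nonneg (hH m k) (bin_nonneg hxs k))
      exact ⟨n, Finset.mem_univ n, by rw [hxs1]; simpa using hHmn⟩
  simp only [hiff]

theorem stmt_13 {M N : ℕ} (H : Fin M → Fin N → ℝ) (hH : ∀ m n, 0 ≤ H m n)
    (x : Fin N → ℝ) (hx : IsBin x) :
    xmax H (S H (xmax H (S H x))) = xmax H (S H x) := by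
  rw [S_fix H hH x hx]
end
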